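/- Let 𝔤 be a Lie algebra over ℂ, let n be a natural number, and let α_0,…,α_n : 𝔤×𝔤 → ℂ be bilinear forms; write α_λ(a,b) = Σ_{i=0}^n λ^i α_i(a,b). Then the conditions (S) α_λ(a,b) = −α_{−λ}(b,a) for all a,b ∈ 𝔤 and λ ∈ ℂ, and (C_cur) α_λ(a,[c,b]) − α_μ(b,[c,a]) = α_{λ+μ}([b,a],c) for all a,b,c ∈ 𝔤 and λ,μ ∈ ℂ, hold if and only if for all a,b,c ∈ 𝔤: α_i(a,b) = (−1)^{i+1} α_i(b,a) for all 0 ≤ i ≤ n; α_i([b,a],c) = 0 and α_i(a,[c,b]) = 0 for all i ≥ 2; α_1(a,[c,b]) = α_1([b,a],c); and α_0(a,[c,b]) − α_0(b,[c,a]) = α_0([b,a],c). -/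
import Mathlib



lemma poly_coeff_zero {N : ℕ} (p : ℕ → ℂ)
    (h : ∀ l : ℂ, ∑ i ∈ Finset.range N, l ^ i * p i = 0) :
    ∀ i, i < N → p i = 0 := by
  intro i hi
  have hq : (∑ j ∈ Finset.range N, Polynomial.C (p j) * Polynomial.X ^ j : Polynomial ℂ) = 0 := by
    apply Polynomial.funext; intro x
    simp only [Polynomial.eval_finset_sum, Polynomial.eval_mul, Polynomial.eval_C,
      Polynomial.eval_pow, Polynomial.eval_X, Polynomial.eval_zero]
    calc ∑ j ∈ Finset.range N, p j * x ^ j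
        = ∑ j ∈ Finset.range N, x ^ j * p j :=
          Finset.sum_congr rfl fun j _ => mul_comm _ _
      _ = 0 := h x
  have h2 := congrArg (fun q => Polynomial.coeff q i) hq
  simpa [Polynomial.finset_sum_coeff, Polynomial.coeff_C_mul, Polynomial.coeff_X_pow, hi]
    using h2

lemma sum_two (n : ℕ) (x : ℂ) (D : ℕ → ℂ) (h2 : ∀ i, 2 ≤ i → D i = 0)
    (h1 : n = 0 → D 1 = 0) :
    ∑ i ∈ Finset.range (n + 1), x ^ i * D i = D 0 + x * D 1 := by
  cases n with
  | zero => simp [h1 rfl]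
  | succ m =>
    induction m with
    | zero => simp [Finset.sum_range_succ, pow_one]
    | succ k ih =>
      rw [Finset.sum_range_succ, h2 (k + 2) (by omega), ih (by omega)]
      ring

/-- The polynomial `α_λ(a,b) = Σ_{i=0}^n λ^i α_i(a,b)` evaluated at `l : ℂ`. -/
noncomputable def alphaPoly {L : Type*} [AddCommGroup L] [Module ℂ L]
    (n : ℕ) (α : ℕ → L →ₗ[ℂ] L →ₗ[ℂ] ℂ) (l : ℂ) (a b : L) : ℂ :=
  ∑ i ∈ Finset.range (n + 1), l ^ i * α i a b

/-- Let `𝔤` be a Lie algebra over `ℂ`, `n : ℕ`, and `α_0, …, α_n`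
bilinear forms on `𝔤`.  The conditions (S) and (C_cur) hold if and only if:
`α_i(a,b) = (−1)^{i+1} α_i(b,a)` for all `0 ≤ i ≤ n`;
`α_i([b,a],c) = 0` and `α_i(a,[c,b]) = 0` for all `i ≥ 2`;
`α_1(a,[c,b]) = α_1([b,a],c)`; and
`α_0(a,[c,b]) − α_0(b,[c,a]) = α_0([b,a],c)`. -/
theorem stmt_5 {L : Type*} [LieRing L] [LieAlgebra ℂ L]
    (n : ℕ) (α : ℕ → L →ₗ[ℂ] L →ₗ[ℂ] ℂ)
    -- the family consists only of `α_0, …, α_n`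
    (hzero : ∀ i : ℕ, n < i → α i = 0) :
    -- condition (S) and condition (C_cur) ...
    ((∀ (a b : L) (l : ℂ), alphaPoly n α l a b = - alphaPoly n α (-l) b a)
      ∧ (∀ (a b c : L) (l m : ℂ),
          alphaPoly n α l a ⁅c, b⁆ - alphaPoly n α m b ⁅c, a⁆
            = alphaPoly n α (l + m) ⁅b, a⁆ c))
    -- ... hold if and only if:
    ↔ ((∀ i : ℕ, i ≤ n → ∀ a b : L, α i a b = (-1 : ℂ) ^ (i + 1) * α i b a)
        ∧ (∀ i : ℕ, 2 ≤ i → i ≤ n → ∀ a b c : L, α i ⁅b, a⁆ c = 0 ∧ α i a ⁅c, b⁆ = 0)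
        ∧ (∀ a b c : L, α 1 a ⁅c, b⁆ = α 1 ⁅b, a⁆ c)
        ∧ (∀ a b c : L, α 0 a ⁅c, b⁆ - α 0 b ⁅c, a⁆ = α 0 ⁅b, a⁆ c)) := by
  
  have hP0 : ∀ x y : L, alphaPoly n α 0 x y = α 0 x y := by
    intro x y
    unfold alphaPoly
    rw [Finset.sum_eq_single 0]
    · simp
    · intro i _ hne; simp [zero_pow hne]
    · simp
  constructor
  · rintro ⟨hS, hC⟩
    -- coefficientwise consequences of (C_cur)
    have hcoef1 : ∀ a b c : L, ∀ i, i < n + 1 →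
        α i a ⁅c,b⁆ - α i ⁅b,a⁆ c - (if i = 0 then α 0 b ⁅c,a⁆ else 0) = 0 := by
      intro a b c
      apply poly_coeff_zero
      intro l
      have h := hC a b c l 0
      rw [hP0, add_zero] at h
      have e : ∑ i ∈ Finset.range (n+1),
          l ^ i * (α i a ⁅c,b⁆ - α i ⁅b,a⁆ c - (if i = 0 then α 0 b ⁅c,a⁆ else 0))
          = alphaPoly n α l a ⁅c,b⁆ - alphaPoly n α l ⁅b,a⁆ c - α 0 b ⁅c,a⁆ := by
        unfold alphaPoly
        simp only [mul_sub, Finset.sum_sub_distrib, mul_ite, mul_zero, Finset.sum_ite_eq',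
          Finset.mem_range, Nat.succ_pos, if_true, pow_zero, one_mul]
      rw [e]; linear_combination h
    have hcoef2 : ∀ a b c : L, ∀ i, i < n + 1 →
        -(α i b ⁅c,a⁆) - α i ⁅b,a⁆ c + (if i = 0 then α 0 a ⁅c,b⁆ else 0) = 0 := by
      intro a b c
      apply poly_coeff_zero
      intro m
      have h := hC a b c 0 m
      rw [hP0, zero_add] at h
      have e : ∑ i ∈ Finset.range (n+1),
          m ^ i * (-(α i b ⁅c,a⁆) - α i ⁅b,a⁆ c + (if i = 0 then α 0 a ⁅c,b⁆ else 0))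
          = -(alphaPoly n α m b ⁅c,a⁆) - alphaPoly n α m ⁅b,a⁆ c + α 0 a ⁅c,b⁆ := by
        unfold alphaPoly
        simp only [mul_sub, mul_add, mul_neg, Finset.sum_add_distrib, Finset.sum_sub_distrib,
          Finset.sum_neg_distrib, mul_ite, mul_zero, Finset.sum_ite_eq',
          Finset.mem_range, Nat.succ_pos, if_true, pow_zero, one_mul]
      rw [e]; linear_combination h
    have hcoef3 : ∀ a b c : L, ∀ i, i < n + 1 →
        α i a ⁅c,b⁆ - α i b ⁅c,a⁆ - 2 ^ i * α i ⁅b,a⁆ c = 0 := by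
      intro a b c
      apply poly_coeff_zero
      intro t
      have h := hC a b c t t
      have e : ∑ i ∈ Finset.range (n+1),
          t ^ i * (α i a ⁅c,b⁆ - α i b ⁅c,a⁆ - 2 ^ i * α i ⁅b,a⁆ c)
          = alphaPoly n α t a ⁅c,b⁆ - alphaPoly n α t b ⁅c,a⁆ - alphaPoly n α (t + t) ⁅b,a⁆ c := by
        unfold alphaPoly
        simp only [mul_sub, Finset.sum_sub_distrib]
        congr 1
        apply Finset.sum_congr rfl
        intro i _
        rw [show t + t = 2 * t by ring, mul_pow]
        ring
      rw [e, h]; ring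
    refine ⟨?_, ?_, ?_, ?_⟩
    · -- symmetry of coefficients
      intro i hi a b
      have key : ∀ l : ℂ, ∑ j ∈ Finset.range (n+1),
          l ^ j * (α j a b + (-1:ℂ) ^ j * α j b a) = 0 := by
        intro l
        have h := hS a b l
        have e : ∑ j ∈ Finset.range (n+1), l ^ j * (α j a b + (-1:ℂ) ^ j * α j b a)
            = alphaPoly n α l a b + alphaPoly n α (-l) b a := by
          unfold alphaPoly
          rw [← Finset.sum_add_distrib]
          exact Finset.sum_congr rfl fun j _ => by rw [neg_pow]; ring
        rw [e, h]; ring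
      have := poly_coeff_zero _ key i (by omega)
      linear_combination this
    · -- vanishing for i ≥ 2
      intro i hi2 hin a b c
      have e1 := hcoef1 a b c i (by omega)
      rw [if_neg (by omega)] at e1
      have e2 := hcoef2 a b c i (by omega)
      rw [if_neg (by omega)] at e2
      have e3 := hcoef3 a b c i (by omega)
      have hne : (2:ℂ) ^ i ≠ 2 := by
        intro hcontra
        have h4 : 4 ≤ 2 ^ i := by
          calc (4:ℕ) = 2 ^ 2 := rfl
            _ ≤ 2 ^ i := Nat.pow_le_pow_right (by norm_num) hi2
        have : ((2 ^ i : ℕ) : ℂ) = ((2 : ℕ) : ℂ) := by push_cast; exact hcontra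
        have := Nat.cast_injective this
        omega
      have hCz : α i ⁅b,a⁆ c = 0 := by
        have hfac : ((2:ℂ) - 2 ^ i) * α i ⁅b,a⁆ c = 0 := by linear_combination e3 - e1 - e2
        rcases mul_eq_zero.mp hfac with h | h
        · exact absurd (by linear_combination -h) hne
        · exact h
      exact ⟨hCz, by linear_combination e1 + hCz⟩
    · -- α 1 relation
      intro a b c
      rcases Nat.eq_zero_or_pos n with hn | hn
      · simp [hzero 1 (by omega)]
      · have e1 := hcoef1 a b c 1 (by omega)
        rw [if_neg (by omega)] at e1
        linear_combination e1
    · -- α 0 relation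
      intro a b c
      have e1 := hcoef1 a b c 0 (by omega)
      rw [if_pos rfl] at e1
      linear_combination e1
  · rintro ⟨h1, h2, h3, h4⟩
    have hA : ∀ i, 2 ≤ i → ∀ a b c : L, α i a ⁅c, b⁆ = 0 := by
      intro i hi a b c
      rcases le_or_gt i n with h | h
      · exact (h2 i hi h a b c).2
      · simp [hzero i h]
    have hCv : ∀ i, 2 ≤ i → ∀ a b c : L, α i ⁅b, a⁆ c = 0 := by
      intro i hi a b c
      rcases le_or_gt i n with h | h
      · exact (h2 i hi h a b c).1
      · simp [hzero i h]
    constructor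
    · intro a b l
      unfold alphaPoly
      rw [← Finset.sum_neg_distrib]
      refine Finset.sum_congr rfl fun i hi => ?_
      rw [h1 i (Nat.lt_succ_iff.mp (Finset.mem_range.mp hi)) a b, neg_pow]
      ring
    · intro a b c l m
      have hA1 : α 1 b ⁅c, a⁆ = - α 1 ⁅b, a⁆ c := by
        rw [h3 b a c, ← lie_skew, map_neg, LinearMap.neg_apply]
      unfold alphaPoly
      rw [sum_two n l _ (fun i hi => hA i hi a b c)
            (fun hn => by simp [hzero 1 (by omega)]),
          sum_two n m _ (fun i hi => hA i hi b a c)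
            (fun hn => by simp [hzero 1 (by omega)]),
          sum_two n (l + m) _ (fun i hi => hCv i hi a b c)
            (fun hn => by simp [hzero 1 (by omega)]),
          h3 a b c, hA1]
      linear_combination h4 a b c
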